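/- arXiv:1111.2409 — 2 statements merged into one kernel-verified Lean document; each statement's English description precedes it below -/
import Mathlib

section
/- If f: ℝⁿ → [0,∞) is log-concave and upper semi-continuous, then f°° = f. -/
/-!
Writing `f = exp (-φ)`, log-concavity and upper semicontinuity say that `φ` is convex and lower
semicontinuous, and `f°° = exp (-φ**)`. So the theorem is Fenchel–Moreau duality: by Hahn–Banach,
separating a point lying strictly above the graph of `log f` from the closed convex hypograph
shows that `f` is the infimum of its majorants of the form `exp (c - ⟪w, ·⟫)`, and every such
majorant bounds `f°°` from above.
-/

/-- The polar of a nonnegative function: `f°(x) = inf_{y : f(y)>0} e^{−⟨x,y⟩}/f(y)`. -/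
noncomputable def funPolar {n : ℕ} (f : EuclideanSpace ℝ (Fin n) → ℝ)
    (x : EuclideanSpace ℝ (Fin n)) : ℝ :=
  ⨅ y : {y : EuclideanSpace ℝ (Fin n) // 0 < f y}, Real.exp (-(inner ℝ x y.1 : ℝ)) / f y.1

open Real Filter
open scoped RealInnerProductSpace

lemma setOf_exp_le_eq_hypograph_log {E : Type*} (f : E → ℝ) :
    {p : E × ℝ | exp p.2 ≤ f p.1} = {p | p.1 ∈ {x | 0 < f x} ∧ p.2 ≤ log (f p.1)} := by
  ext ⟨z, t⟩
  exact ⟨fun h => ⟨(exp_pos t).trans_le h, (le_log_iff_exp_le ((exp_pos t).trans_le h)).2 h⟩,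
    fun ⟨hz, ht⟩ => (le_log_iff_exp_le hz).1 ht⟩

section Majorant

variable {E : Type*} [NormedAddCommGroup E] [NormedSpace ℝ E] {f : E → ℝ}

lemma exists_separation_of_lt_exp (hlc : ConcaveOn ℝ {x | 0 < f x} (fun x => log (f x)))
    (husc : UpperSemicontinuous f) {x : E} {s : ℝ} (hx : f x < exp s) :
    ∃ (ℓ : E →L[ℝ] ℝ) (β u : ℝ), (∀ z t, exp t ≤ f z → ℓ z + β * t < u) ∧
      u < ℓ x + β * s := by
  have hconv : Convex ℝ {p : E × ℝ | exp p.2 ≤ f p.1} := by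
    rw [setOf_exp_le_eq_hypograph_log]
    exact hlc.convex_hypograph
  have hclosed : IsClosed {p : E × ℝ | exp p.2 ≤ f p.1} :=
    husc.IsClosed_hypograph.preimage (continuous_fst.prodMk (continuous_exp.comp continuous_snd))
  obtain ⟨φ, u, hK, hxs⟩ :=
    geometric_hahn_banach_closed_point (x := (x, s)) hconv hclosed hx.not_ge
  have hφ : ∀ z t, φ (z, t) = φ.comp (.inl ℝ E ℝ) z + φ (0, 1) * t := by
    intro z t
    rw [show (z, t) = (z, 0) + t • ((0 : E), (1 : ℝ)) by simp, map_add, map_smul]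
    simp [mul_comm]
  exact ⟨φ.comp (.inl ℝ E ℝ), φ (0, 1), u, fun z t h => (hφ z t).symm.trans_lt (hK (z, t) h),
    hxs.trans_eq (hφ x s)⟩

lemma nonneg_of_forall_exp_le_imp_lt {ℓ : E →L[ℝ] ℝ} {β u : ℝ}
    (hK : ∀ z t, exp t ≤ f z → ℓ z + β * t < u) {z₀ : E} (hz₀ : 0 < f z₀) : 0 ≤ β := by
  by_contra! hβ
  have hlim : Tendsto (fun t => ℓ z₀ + β * t) atBot atTop :=
    tendsto_atTop_add_const_left _ _ (tendsto_id.const_mul_atBot_of_neg hβ)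
  obtain ⟨t, ht, hle⟩ :=
    ((hlim.eventually_ge_atTop u).and (eventually_le_atBot (log (f z₀)))).exists
  exact (hK z₀ t ((exp_le_exp.2 hle).trans_eq (exp_log hz₀))).not_ge ht

lemma exists_majorant_of_separation {ℓ : E →L[ℝ] ℝ} {β u s : ℝ} {x : E} (hβ : 0 < β)
    (hK : ∀ z, 0 < f z → ℓ z + β * log (f z) < u) (hxs : u < ℓ x + β * s) :
    ∃ (ℓ' : E →L[ℝ] ℝ) (c : ℝ), (∀ z, 0 < f z → f z ≤ exp (ℓ' z + c)) ∧ ℓ' x + c < s := by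
  refine ⟨-β⁻¹ • ℓ, β⁻¹ * u, fun z hz => ?_, ?_⟩
  · have hz' := hK z hz
    rw [← exp_log hz]
    gcongr
    calc log (f z) ≤ β⁻¹ * (u - ℓ z) := by rw [le_inv_mul_iff₀ hβ]; linarith
      _ = (-β⁻¹ • ℓ) z + β⁻¹ * u := by simp; ring
  · calc (-β⁻¹ • ℓ) x + β⁻¹ * u = β⁻¹ * (u - ℓ x) := by simp; ring
      _ < s := by rw [inv_mul_lt_iff₀ hβ]; linarith

lemma exists_majorant_of_vertical_separation {ℓ₀ ℓ : E →L[ℝ] ℝ} {c₀ u s : ℝ} {x : E}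
    (h₀ : ∀ z, 0 < f z → f z ≤ exp (ℓ₀ z + c₀)) (hK : ∀ z, 0 < f z → ℓ z < u) (hxu : u < ℓ x) :
    ∃ (ℓ' : E →L[ℝ] ℝ) (c : ℝ), (∀ z, 0 < f z → f z ≤ exp (ℓ' z + c)) ∧ ℓ' x + c < s := by
  -- Since `ℓ < u` on the support, `ℓ₀ + c₀ + T (u - ℓ)` is still a majorant for `T ≥ 0`, and its
  -- value at `x` tends to `-∞`.
  have hlim : Tendsto (fun T => ℓ₀ x + c₀ + (u - ℓ x) * T) atTop atBot :=
    tendsto_atBot_add_const_left _ _ (tendsto_id.const_mul_atTop_of_neg (by linarith))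
  obtain ⟨T, hT, hT0⟩ := ((hlim.eventually_lt_atBot s).and (eventually_ge_atTop 0)).exists
  refine ⟨ℓ₀ - T • ℓ, c₀ + T * u, fun z hz => (h₀ z hz).trans (exp_le_exp.2 ?_), ?_⟩
  · have := mul_nonneg hT0 (sub_nonneg.2 (hK z hz).le)
    simp only [sub_apply, smul_apply, smul_eq_mul]
    linarith
  · simp only [sub_apply, smul_apply, smul_eq_mul]
    linarith

lemma exists_majorant_of_pos (hlc : ConcaveOn ℝ {x | 0 < f x} (fun x => log (f x)))
    (husc : UpperSemicontinuous f) {z₀ : E} (hz₀ : 0 < f z₀) :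
    ∃ (ℓ : E →L[ℝ] ℝ) (c : ℝ), ∀ z, 0 < f z → f z ≤ exp (ℓ z + c) := by
  have hlt : f z₀ < exp (log (f z₀) + 1) :=
    (exp_log hz₀).symm.trans_lt (exp_lt_exp.2 (lt_add_one _))
  obtain ⟨ℓ, β, u, hK, hxs⟩ := exists_separation_of_lt_exp hlc husc hlt
  have hβ : 0 < β := by linarith [hK z₀ _ (exp_log hz₀).le]
  obtain ⟨ℓ', c, h, -⟩ :=
    exists_majorant_of_separation hβ (fun z hz => hK z _ (exp_log hz).le) hxs
  exact ⟨ℓ', c, h⟩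

theorem exists_majorant_lt_of_lt_exp (hlc : ConcaveOn ℝ {x | 0 < f x} (fun x => log (f x)))
    (husc : UpperSemicontinuous f) {x : E} {s : ℝ} (hx : f x < exp s) :
    ∃ (ℓ : E →L[ℝ] ℝ) (c : ℝ), (∀ z, 0 < f z → f z ≤ exp (ℓ z + c)) ∧ ℓ x + c < s := by
  by_cases hne : ∃ z₀, 0 < f z₀
  swap
  · push Not at hne
    exact ⟨0, s - 1, fun z hz => absurd hz (hne z).not_gt, by simp⟩
  obtain ⟨z₀, hz₀⟩ := hne
  obtain ⟨ℓ, β, u, hK, hxs⟩ := exists_separation_of_lt_exp hlc husc hx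
  have hKlog : ∀ z, 0 < f z → ℓ z + β * log (f z) < u := fun z hz => hK z _ (exp_log hz).le
  rcases (nonneg_of_forall_exp_le_imp_lt hK hz₀).lt_or_eq with hβ | rfl
  · exact exists_majorant_of_separation hβ hKlog hxs
  · obtain ⟨ℓ₀, c₀, h₀⟩ := exists_majorant_of_pos hlc husc hz₀
    simp only [zero_mul, add_zero] at hKlog hxs
    exact exists_majorant_of_vertical_separation h₀ hKlog hxs

end Majorant

theorem exists_inner_majorant_lt_of_lt_exp {F : Type*} [NormedAddCommGroup F]
    [InnerProductSpace ℝ F] [CompleteSpace F] {f : F → ℝ}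
    (hlc : ConcaveOn ℝ {x | 0 < f x} (fun x => log (f x))) (husc : UpperSemicontinuous f)
    {x : F} {s : ℝ} (hx : f x < exp s) :
    ∃ (w : F) (c : ℝ), (∀ z, 0 < f z → f z ≤ exp (c - ⟪w, z⟫)) ∧ c - ⟪w, x⟫ < s := by
  obtain ⟨ℓ, c, h, hxc⟩ := exists_majorant_lt_of_lt_exp hlc husc hx
  have hw : ∀ z, ⟪(InnerProductSpace.toDual ℝ F).symm (-ℓ), z⟫ = -ℓ z :=
    fun z => InnerProductSpace.toDual_symm_apply
  refine ⟨(InnerProductSpace.toDual ℝ F).symm (-ℓ), c, fun z hz => ?_, ?_⟩ <;>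
    rw [hw, sub_neg_eq_add, add_comm]
  exacts [h z hz, hxc]

section funPolar

variable {n : ℕ} {f : EuclideanSpace ℝ (Fin n) → ℝ}

lemma funPolar_nonneg (f : EuclideanSpace ℝ (Fin n) → ℝ) (x : EuclideanSpace ℝ (Fin n)) :
    0 ≤ funPolar f x :=
  Real.iInf_nonneg fun y => div_nonneg (exp_pos _).le y.2.le

lemma funPolar_le {x y : EuclideanSpace ℝ (Fin n)} (hy : 0 < f y) :
    funPolar f x ≤ exp (-⟪x, y⟫) / f y := by
  refine ciInf_le ⟨0, ?_⟩ (⟨y, hy⟩ : {y // 0 < f y})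
  rintro _ ⟨z, rfl⟩
  exact div_nonneg (exp_pos _).le z.2.le

lemma le_funPolar {x : EuclideanSpace ℝ (Fin n)} {c : ℝ} (hne : ∃ y, 0 < f y)
    (h : ∀ y, 0 < f y → c ≤ exp (-⟪x, y⟫) / f y) : c ≤ funPolar f x :=
  have : Nonempty {y // 0 < f y} := let ⟨y, hy⟩ := hne; ⟨⟨y, hy⟩⟩
  le_ciInf fun y => h y.1 y.2

-- The infimum over an empty index type is `0` in `ℝ`, not `+∞`.
lemma funPolar_eq_zero (h : ∀ y, f y ≤ 0) : funPolar f = 0 := by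
  funext x
  have : IsEmpty {y // 0 < f y} := ⟨fun y => (h y.1).not_gt y.2⟩
  exact Real.iInf_of_isEmpty _

lemma exp_neg_le_funPolar {w : EuclideanSpace ℝ (Fin n)} {c : ℝ} (hne : ∃ y, 0 < f y)
    (h : ∀ z, 0 < f z → f z ≤ exp (c - ⟪w, z⟫)) : exp (-c) ≤ funPolar f w :=
  le_funPolar hne fun z hz =>
    calc exp (-c) = exp (-⟪w, z⟫) / exp (c - ⟪w, z⟫) := by rw [← exp_sub]; ring_nf
      _ ≤ exp (-⟪w, z⟫) / f z := div_le_div_of_nonneg_left (exp_pos _).le hz (h z hz)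

lemma funPolar_funPolar_le {w : EuclideanSpace ℝ (Fin n)} {c : ℝ} (hne : ∃ y, 0 < f y)
    (h : ∀ z, 0 < f z → f z ≤ exp (c - ⟪w, z⟫)) (x : EuclideanSpace ℝ (Fin n)) :
    funPolar (funPolar f) x ≤ exp (c - ⟪w, x⟫) := by
  have hw := exp_neg_le_funPolar hne h
  calc funPolar (funPolar f) x ≤ exp (-⟪x, w⟫) / funPolar f w :=
        funPolar_le ((exp_pos _).trans_le hw)
    _ ≤ exp (-⟪x, w⟫) / exp (-c) := div_le_div_of_nonneg_left (exp_pos _).le (exp_pos _) hw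
    _ = exp (c - ⟪w, x⟫) := by rw [← exp_sub, real_inner_comm]; ring_nf

lemma le_funPolar_funPolar (hpos : ∃ w, 0 < funPolar f w) (x : EuclideanSpace ℝ (Fin n)) :
    f x ≤ funPolar (funPolar f) x := by
  rcases le_or_gt (f x) 0 with hx | hx
  · exact hx.trans (funPolar_nonneg _ _)
  refine le_funPolar hpos fun y hy => ?_
  have hyx : funPolar f y ≤ exp (-⟪y, x⟫) / f x := funPolar_le hx
  rw [le_div_iff₀ hx, real_inner_comm] at hyx
  rwa [le_div_iff₀' hy]

end funPolar

lemma exists_funPolar_pos {n : ℕ} {f : EuclideanSpace ℝ (Fin n) → ℝ}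
    (hlc : ConcaveOn ℝ {x | 0 < f x} (fun x => log (f x))) (husc : UpperSemicontinuous f)
    {y : EuclideanSpace ℝ (Fin n)} (hy : 0 < f y) : ∃ w, 0 < funPolar f w := by
  obtain ⟨w, c, hwc, -⟩ := exists_inner_majorant_lt_of_lt_exp hlc husc
    ((exp_log hy).symm.trans_lt (exp_lt_exp.2 (lt_add_one _)))
  exact ⟨w, (exp_pos _).trans_le (exp_neg_le_funPolar ⟨y, hy⟩ hwc)⟩

/-- If `f : ℝⁿ → [0,∞)` is log-concave and upper semi-continuous, then `f°° = f`. -/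
theorem stmt6 {n : ℕ} (f : EuclideanSpace ℝ (Fin n) → ℝ)
    (hf0 : ∀ x, 0 ≤ f x)
    (hlc : ConcaveOn ℝ {x | 0 < f x} (fun x => Real.log (f x)))
    (husc : UpperSemicontinuous f) :
    ∀ x, funPolar (funPolar f) x = f x := by
  intro x
  by_cases hne : ∃ y, 0 < f y
  · obtain ⟨y, hy⟩ := hne
    refine le_antisymm (le_of_forall_gt_imp_ge_of_dense fun r hr => ?_)
      (le_funPolar_funPolar (exists_funPolar_pos hlc husc hy) x)
    have hr0 : 0 < r := (hf0 x).trans_lt hr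
    obtain ⟨w, c, hwc, hlt⟩ :=
      exists_inner_majorant_lt_of_lt_exp hlc husc (hr.trans_eq (exp_log hr0).symm)
    calc funPolar (funPolar f) x ≤ exp (c - ⟪w, x⟫) := funPolar_funPolar_le ⟨y, hy⟩ hwc x
      _ ≤ exp (log r) := exp_le_exp.2 hlt.le
      _ = r := exp_log hr0
  · push Not at hne
    rw [funPolar_eq_zero hne, funPolar_eq_zero (f := 0) fun _ => le_rfl]
    exact (le_antisymm (hne x) (hf0 x)).symm
end

section
/- Let g: ℝⁿ → [0,∞) be an s-concave function (s a positive integer) with bounded support. Define K_s(g) = {(x,y) ∈ ℝⁿ × ℝˢ : √s · x ∈ closure(supp g), |y| ≤ g^{1/s}(√s · x)}. Then Vol_{n+s}(K_s(g)) = (Vol(B₂ˢ) / s^{n/2}) · ∫_{ℝⁿ} g(x) dx. -/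
/-!
By Fubini, `Vol(K_s(g))` is the integral over `x` of the volume of the slice, a closed ball of
radius `g(√s x)^{1/s}` in `ℝˢ`, i.e. of `Vol(B₂ˢ) g(√s x)`; the substitution `x ↦ √s x` then
produces the factor `s^{-n/2}`. The one analytic point is that `g` is integrable: if its support
has nonempty interior, the concave function `g^{1/s}` is bounded on the bounded support by its
value at an interior point, and otherwise the convex support is null.
-/

open MeasureTheory

/-- The body `K_s(g) = {(x,y) ∈ ℝⁿ×ℝˢ : √s·x ∈ closure(supp g), |y| ≤ g(√s·x)^{1/s}}`. -/
noncomputable def Ksbody {n s : ℕ} (g : EuclideanSpace ℝ (Fin n) → ℝ) :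
    Set (EuclideanSpace ℝ (Fin n) × EuclideanSpace ℝ (Fin s)) :=
  {p | Real.sqrt s • p.1 ∈ closure (Function.support g) ∧
      ‖p.2‖ ≤ g (Real.sqrt s • p.1) ^ ((1 : ℝ) / s)}

open Metric Set

section ConcaveBound

variable {E : Type*} [NormedAddCommGroup E] [NormedSpace ℝ E] {C : Set E} {f : E → ℝ}

theorem ConcaveOn.le_one_add_div_mul_of_closedBall_subset (hf : ConcaveOn ℝ C f)
    (hf0 : ∀ x ∈ C, 0 ≤ f x) {z : E} {r : ℝ} (hr : 0 < r) (hball : closedBall z r ⊆ C)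
    {x : E} (hx : x ∈ C) : f x ≤ (1 + ‖x - z‖ / r) * f z := by
  rcases eq_or_ne x z with rfl | hxz
  · simp
  set t := ‖x - z‖
  have ht : 0 < t := norm_pos_iff.2 (sub_ne_zero.2 hxz)
  -- `z` lies on the segment from `x` to the point `w` of `sphere z r` opposite to `x`
  set w := z + (r / t) • (z - x)
  have hw : w ∈ C := hball <| by
    rw [mem_closedBall, dist_eq_norm, add_sub_cancel_left, norm_smul, norm_sub_rev,
      Real.norm_of_nonneg (by positivity), div_mul_cancel₀ _ ht.ne']
  have hz : (r / (r + t)) • x + (t / (r + t)) • w = z := by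
    simp only [w]
    match_scalars <;> field_simp <;> ring
  have hconc := hf.2 hx hw (by positivity : 0 ≤ r / (r + t)) (by positivity : 0 ≤ t / (r + t))
    (by field_simp)
  rw [hz, smul_eq_mul, smul_eq_mul] at hconc
  have hfw : 0 ≤ t / (r + t) * f w := mul_nonneg (by positivity) (hf0 w hw)
  calc f x = (1 + t / r) * (r / (r + t) * f x) := by field_simp
    _ ≤ (1 + t / r) * f z := by gcongr; linarith

theorem ConcaveOn.bddAbove_image_of_isBounded (hf : ConcaveOn ℝ C f)
    (hf0 : ∀ x ∈ C, 0 ≤ f x) (hC : Bornology.IsBounded C) (hint : (interior C).Nonempty) :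
    BddAbove (f '' C) := by
  obtain ⟨z, hz⟩ := hint
  obtain ⟨r, hr, hball⟩ := nhds_basis_closedBall.mem_iff.1 (mem_interior_iff_mem_nhds.1 hz)
  obtain ⟨R, hR⟩ := hC.subset_closedBall z
  refine ⟨(1 + R / r) * f z, forall_mem_image.2 fun x hx => ?_⟩
  calc f x ≤ (1 + ‖x - z‖ / r) * f z :=
        hf.le_one_add_div_mul_of_closedBall_subset hf0 hr hball hx
    _ ≤ (1 + R / r) * f z := by
        have := hR hx
        rw [mem_closedBall, dist_eq_norm] at this
        gcongr
        exact hf0 z (interior_subset hz)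

end ConcaveBound

theorem integrable_of_concaveOn_rpow {E : Type*} [NormedAddCommGroup E] [NormedSpace ℝ E]
    [MeasurableSpace E] [BorelSpace E] [FiniteDimensional ℝ E] {μ : Measure E}
    [μ.IsAddHaarMeasure] {g : E → ℝ} {p : ℝ} (hp : 0 < p) (hg0 : ∀ x, 0 ≤ g x)
    (hconc : ConcaveOn ℝ {x | 0 < g x} (fun x => g x ^ p))
    (hbd : Bornology.IsBounded (Function.support g)) (hmeas : AEStronglyMeasurable g μ) :
    Integrable g μ := by
  have hsupp : Function.support g = {x | 0 < g x} := by
    ext x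
    exact (hg0 x).lt_iff_ne'.symm
  set C := {x | 0 < g x}
  rw [hsupp] at hbd
  refine (integrableOn_iff_integrable_of_support_subset hsupp.le).1 ?_
  obtain ⟨M, hM⟩ : ∃ M, ∀ᵐ x ∂μ.restrict C, ‖g x‖ ≤ M := by
    rcases (interior C).eq_empty_or_nonempty with hint | hint
    · -- with empty interior, the convex set `C` lies in its own frontier, which is null
      have hfrontier : C ⊆ frontier C := fun x hx =>
        ⟨subset_closure hx, by rw [hint]; exact notMem_empty x⟩
      have hnull : μ C = 0 := measure_mono_null hfrontier (hconc.1.addHaar_frontier μ)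
      exact ⟨0, by simp [Measure.restrict_eq_zero.2 hnull]⟩
    · obtain ⟨M, hM⟩ := hconc.bddAbove_image_of_isBounded
        (fun x _ => Real.rpow_nonneg (hg0 x) p) hbd hint
      obtain ⟨z, hz⟩ := hint
      have hM0 : 0 ≤ M :=
        (Real.rpow_nonneg (hg0 z) p).trans (hM (mem_image_of_mem _ (interior_subset hz)))
      refine ⟨M ^ p⁻¹, ae_of_all _ fun x => ?_⟩
      rw [Real.norm_of_nonneg (hg0 x)]
      by_cases hx : x ∈ C
      · calc g x = (g x ^ p) ^ p⁻¹ := (Real.rpow_rpow_inv (hg0 x) hp.ne').symm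
          _ ≤ M ^ p⁻¹ := by
            gcongr
            exacts [Real.rpow_nonneg (hg0 x) p, hM (mem_image_of_mem _ hx)]
      · rw [show g x = 0 from (not_lt.1 hx).antisymm (hg0 x)]
        positivity
  exact Measure.integrableOn_of_bounded hbd.measure_lt_top.ne hmeas hM

section Ksbody

variable {n s : ℕ} {g : EuclideanSpace ℝ (Fin n) → ℝ}

theorem measurableSet_Ksbody (hmeas : Measurable g) : MeasurableSet (Ksbody (s := s) g) := by
  have hsmul : Measurable fun p : EuclideanSpace ℝ (Fin n) × EuclideanSpace ℝ (Fin s) =>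
      Real.sqrt s • p.1 := (continuous_const_smul _).measurable.comp measurable_fst
  exact (hsmul isClosed_closure.measurableSet).inter <| measurableSet_le measurable_snd.norm
    ((Real.continuous_rpow_const (by positivity)).measurable.comp (hmeas.comp hsmul))

theorem volume_preimage_mk_Ksbody (hs : 0 < s) (hg0 : ∀ x, 0 ≤ g x)
    (x : EuclideanSpace ℝ (Fin n)) :
    volume (Prod.mk x ⁻¹' Ksbody (s := s) g) =
      ENNReal.ofReal (g (Real.sqrt s • x)) * volume (ball (0 : EuclideanSpace ℝ (Fin s)) 1) := by
  by_cases hx : Real.sqrt s • x ∈ closure (Function.support g)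
  · have hslice : Prod.mk x ⁻¹' Ksbody (s := s) g
        = closedBall 0 (g (Real.sqrt s • x) ^ ((1 : ℝ) / s)) := by
      ext y
      simp [Ksbody, hx]
    rw [hslice, Measure.addHaar_closedBall _ _ (Real.rpow_nonneg (hg0 _) _), finrank_euclideanSpace,
      Fintype.card_fin, one_div, Real.rpow_inv_natCast_pow (hg0 _) hs.ne']
  · have hslice : Prod.mk x ⁻¹' Ksbody (s := s) g = ∅ := by
      ext y
      simp [Ksbody, hx]
    rw [hslice, Function.notMem_support.1 (notMem_of_notMem_closure hx)]
    simp

end Ksbody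

/-- For an `s`-concave `g : ℝⁿ → [0,∞)` with bounded support,
`Vol_{n+s}(K_s(g)) = (Vol(B₂ˢ)/s^{n/2}) ∫ g`. -/
theorem stmt15 {n s : ℕ} (hs : 0 < s) (g : EuclideanSpace ℝ (Fin n) → ℝ)
    (hg0 : ∀ x, 0 ≤ g x)
    (hsconc : ConcaveOn ℝ {x | 0 < g x} (fun x => g x ^ ((1 : ℝ) / s)))
    (hbd : Bornology.IsBounded (Function.support g))
    (hmeas : Measurable g) :
    volume (Ksbody (s := s) g)
      = volume (Metric.ball (0 : EuclideanSpace ℝ (Fin s)) 1)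
        * ENNReal.ofReal ((Real.sqrt s ^ n)⁻¹ * ∫ x, g x) := by
  have hint : Integrable g :=
    integrable_of_concaveOn_rpow (by positivity) hg0 hsconc hbd hmeas.aestronglyMeasurable
  have hsqrt : Real.sqrt s ≠ 0 := by positivity
  set B := volume (ball (0 : EuclideanSpace ℝ (Fin s)) 1)
  calc volume (Ksbody (s := s) g)
      = ∫⁻ x, volume (Prod.mk x ⁻¹' Ksbody (s := s) g) := by
        rw [Measure.volume_eq_prod, Measure.prod_apply (measurableSet_Ksbody hmeas)]
    _ = ∫⁻ x, ENNReal.ofReal (g (Real.sqrt s • x)) * B :=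
        lintegral_congr (volume_preimage_mk_Ksbody hs hg0)
    _ = ENNReal.ofReal (∫ x, g (Real.sqrt s • x)) * B := by
        rw [lintegral_mul_const' _ _ measure_ball_lt_top.ne, ofReal_integral_eq_lintegral_ofReal
          (hint.comp_smul hsqrt) (ae_of_all _ fun x => hg0 _)]
    _ = B * ENNReal.ofReal ((Real.sqrt s ^ n)⁻¹ * ∫ x, g x) := by
        rw [Measure.integral_comp_smul_of_nonneg volume g (Real.sqrt s) (hR := Real.sqrt_nonneg _),
          finrank_euclideanSpace, Fintype.card_fin, smul_eq_mul, mul_comm]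
end
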